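/- Let T be a linear isometry of (V, d_{w,(P,π)}) and i ∈ [s]. Then there is a unique j ∈ [s] with |⟨i⟩| = |⟨j⟩| and T(V_{⟨i⟩}) ⊆ V_{⟨j⟩}. -/

import Mathlib

attribute [local instance] Classical.propDecidable

noncomputable section

variable {ι F : Type*}

section Defs
variable [Fintype ι] [PartialOrder ι] [Field F] [Fintype F] {k : ι → ℕ}

/-- block support -/
def suppB (u : ∀ i, Fin (k i) → F) : Finset ι :=
  Finset.univ.filter fun i => u i ≠ 0

/-- order ideal generated by the block support -/
def idealOf (u : ∀ i, Fin (k i) → F) : Finset ι :=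
  Finset.univ.filter fun i => ∃ j ∈ suppB u, i ≤ j

/-- maximal elements of the ideal generated by the support -/
def maxOf (u : ∀ i, Fin (k i) → F) : Finset ι :=
  (idealOf u).filter fun i => ∀ j ∈ idealOf u, i ≤ j → i = j

/-- maximal weight of a block -/
def Wblk (w : F → ℕ) (u : ∀ i, Fin (k i) → F) (i : ι) : ℕ :=
  Finset.univ.sup fun j => w (u i j)

/-- maximal value of the weight -/
def Mw (w : F → ℕ) : ℕ := Finset.univ.sup w

/-- minimal value of the weight on nonzero elements -/
def mw (w : F → ℕ) : ℕ := sInf (w '' {a | a ≠ 0})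

/-- the weighted poset block weight -/
def omegaW (w : F → ℕ) (u : ∀ i, Fin (k i) → F) : ℕ :=
  (∑ i ∈ maxOf u, Wblk w u i) + (idealOf u \ maxOf u).card * Mw w

/-- principal ideal generated by `i` -/
def pIdeal (i : ι) : Finset ι := Finset.univ.filter fun j => j ≤ i

end Defs

/-!
Induction on `|⟨i⟩|`. Only `0` has weight `0`, so `T` is a linear automorphism and `T⁻¹` is an
isometry as well. By induction `T` maps `V_⟨t⟩` onto some `V_⟨σ t⟩` for every `t < i`, hence `V_L`
onto `V_J` for `L = ⟨i⟩ \ {i}` and a lower set `J`. A lower set `S` carries a vector of weight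
`|S| M_w` (fill its blocks with a letter of maximal weight), while a vector supported in a lower
set `U` weighs at most `|U| M_w`; so `|J| = |L|`.

For a unit vector `y` of block `i` write `T y = T a + z` with `z ∈ V_J` and `T a` vanishing on `J`.
Each `c • T a + z'` with `z' ∈ V_J` is the image of a vector with ideal `⟨i⟩` and block `i` equal
to `c eᵣ`, so it weighs `w c + |L| M_w`. With `w c = m_w` and `z'` saturated on `J` this shows
that `idealOf (T a) \ J` is a single point `μ`; with `w c = M_w` it forces `⟨μ⟩ = J ∪ {μ}`. Two
different such `μ` would give a vector of `V_⟨i⟩` whose image weighs at least `(|⟨i⟩| + 1) M_w`.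
Uniqueness of `j` is the same weight count for `V_{⟨j⟩ ∩ ⟨j'⟩}`.
-/

open Finset

section Weights
variable {k : ι → ℕ} (w : F → ℕ)

theorem Wblk_of_eq_const {u : ∀ i, Fin (k i) → F} {t : ι} (ht : 0 < k t) {a : F}
    (h : u t = fun _ => a) : Wblk w u t = w a := by
  have : (univ : Finset (Fin (k t))).Nonempty := ⟨⟨0, ht⟩, mem_univ _⟩
  simp [Wblk, h, sup_const this]

variable [Fintype F]

theorem le_Mw (a : F) : w a ≤ Mw w :=
  le_sup (mem_univ a)

theorem Wblk_le_Mw (u : ∀ i, Fin (k i) → F) (t : ι) : Wblk w u t ≤ Mw w :=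
  Finset.sup_le fun _ _ => le_Mw w _

end Weights

section FieldWeights
variable [Field F] {k : ι → ℕ} (w : F → ℕ)

theorem exists_ne_zero_eq_mw : ∃ a ≠ 0, w a = mw w :=
  Nat.sInf_mem (s := w '' {a | a ≠ 0}) ⟨w 1, 1, one_ne_zero, rfl⟩

theorem mw_le {a : F} (ha : a ≠ 0) : mw w ≤ w a :=
  Nat.sInf_le ⟨a, ha, rfl⟩

theorem one_le_mw (hw0 : ∀ a, w a = 0 ↔ a = 0) : 1 ≤ mw w := by
  obtain ⟨a, ha, hwa⟩ := exists_ne_zero_eq_mw w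
  rw [← hwa, Nat.one_le_iff_ne_zero, Ne, hw0]
  exact ha

theorem mw_le_Wblk {u : ∀ i, Fin (k i) → F} {t : ι} (h : u t ≠ 0) : mw w ≤ Wblk w u t := by
  obtain ⟨r, hr⟩ := Function.ne_iff.1 h
  exact (mw_le w hr).trans (le_sup (f := fun r => w (u t r)) (mem_univ r))

theorem Wblk_of_eq_single (hw0 : w 0 = 0) {u : ∀ i, Fin (k i) → F} {t : ι} {r : Fin (k t)}
    {a : F} (h : u t = Pi.single r a) : Wblk w u t = w a := by
  refine (Finset.sup_le fun s _ => ?_).antisymm ?_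
  · rcases eq_or_ne s r with rfl | hs
    · simp [h]
    · simp [h, hs, hw0]
  · simpa [h] using le_sup (f := fun s => w (u t s)) (mem_univ r)

variable [Fintype F]

theorem exists_eq_Mw : ∃ a, w a = Mw w := by
  obtain ⟨a, -, ha⟩ := exists_mem_eq_sup univ univ_nonempty w
  exact ⟨a, ha.symm⟩

theorem mw_le_Mw : mw w ≤ Mw w := by
  obtain ⟨a, -, ha⟩ := exists_ne_zero_eq_mw w
  exact ha ▸ le_Mw w a

theorem one_le_Mw (hw0 : ∀ a, w a = 0 ↔ a = 0) : 1 ≤ Mw w :=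
  (one_le_mw w hw0).trans (mw_le_Mw w)

theorem ne_zero_of_eq_Mw (hw0 : ∀ a, w a = 0 ↔ a = 0) {a : F} (ha : w a = Mw w) : a ≠ 0 := by
  rintro rfl
  have := one_le_Mw w hw0
  rw [← ha, (hw0 0).2 rfl] at this
  exact Nat.not_succ_le_zero 0 this

end FieldWeights

theorem single_eq_sum_smul_single [Field F] {k : ι → ℕ} (t : ι) (φ : Fin (k t) → F) :
    (Pi.single t φ : ∀ i, Fin (k i) → F) = ∑ r, φ r • Pi.single t (Pi.single r 1) := by
  conv_lhs => rw [pi_eq_sum_univ' φ]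
  have := map_sum (LinearMap.single F (fun i => Fin (k i) → F) t)
    (fun r => φ r • Pi.single r 1) univ
  rw [LinearMap.single_apply] at this
  rw [this]
  simp

section Support
variable [Fintype ι] [Field F] {k : ι → ℕ}

theorem mem_suppB {u : ∀ i, Fin (k i) → F} {t : ι} : t ∈ suppB u ↔ u t ≠ 0 := by
  simp [suppB]

theorem suppB_add_subset (u v : ∀ i, Fin (k i) → F) : suppB (u + v) ⊆ suppB u ∪ suppB v := by
  intro t
  simp only [mem_suppB, mem_union, Pi.add_apply]
  contrapose!
  rintro ⟨hu, hv⟩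
  simp [hu, hv]

theorem suppB_smul {c : F} (hc : c ≠ 0) (u : ∀ i, Fin (k i) → F) : suppB (c • u) = suppB u := by
  ext t
  simp [mem_suppB, hc]

theorem suppB_single {t : ι} {φ : Fin (k t) → F} (hφ : φ ≠ 0) :
    suppB (Pi.single t φ : ∀ i, Fin (k i) → F) = {t} := by
  ext s
  rcases eq_or_ne s t with rfl | hs
  · simpa [mem_suppB] using hφ
  · simp [mem_suppB, hs]

def blockSubspace (S : Finset ι) : Submodule F (∀ i, Fin (k i) → F) :=
  Submodule.pi {t | t ∉ S} fun _ => ⊥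

theorem mem_blockSubspace {S : Finset ι} {u : ∀ i, Fin (k i) → F} :
    u ∈ blockSubspace S ↔ suppB u ⊆ S := by
  simp only [blockSubspace, Submodule.mem_pi, Set.mem_ofPred_eq, Submodule.mem_bot]
  constructor
  · intro h t ht
    by_contra hS
    exact mem_suppB.1 ht (h t hS)
  · intro h t hS
    by_contra ht
    exact hS (h (mem_suppB.2 ht))

theorem blockSubspace_mono {S U : Finset ι} (h : S ⊆ U) :
    blockSubspace S ≤ (blockSubspace U : Submodule F (∀ i, Fin (k i) → F)) :=
  fun _ hu => mem_blockSubspace.2 ((mem_blockSubspace.1 hu).trans h)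

theorem single_mem_blockSubspace {S : Finset ι} {t : ι} (ht : t ∈ S) (φ : Fin (k t) → F) :
    (Pi.single t φ : ∀ i, Fin (k i) → F) ∈ blockSubspace S := by
  rw [mem_blockSubspace]
  intro s hs
  rcases eq_or_ne s t with rfl | hst
  · exact ht
  · simp [mem_suppB, hst] at hs

theorem apply_eq_zero_of_mem_blockSubspace {S : Finset ι} {u : ∀ i, Fin (k i) → F}
    (hu : u ∈ blockSubspace S) {t : ι} (ht : t ∉ S) : u t = 0 := by
  by_contra h
  exact ht (mem_blockSubspace.1 hu (mem_suppB.2 h))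

theorem piecewise_sub_mem_blockSubspace (S : Finset ι) (u v : ∀ i, Fin (k i) → F) :
    S.piecewise u v - v ∈ blockSubspace S := by
  rw [mem_blockSubspace]
  intro t ht
  by_contra hS
  simp [mem_suppB, hS] at ht

theorem subset_of_blockSubspace_le (hk : ∀ i, 0 < k i) {S U : Finset ι}
    (h : blockSubspace S ≤ (blockSubspace U : Submodule F (∀ i, Fin (k i) → F))) : S ⊆ U := by
  intro t ht
  have hφ : (fun _ => 1 : Fin (k t) → F) ≠ 0 := Function.ne_iff.2 ⟨⟨0, hk t⟩, one_ne_zero⟩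
  have := mem_blockSubspace.1 (h (single_mem_blockSubspace ht (fun _ => (1 : F))))
  rw [suppB_single hφ, singleton_subset_iff] at this
  exact this

theorem le_comap_of_single {S U : Finset ι}
    (f : (∀ i, Fin (k i) → F) →ₗ[F] (∀ i, Fin (k i) → F))
    (h : ∀ t ∈ S, ∀ φ : Fin (k t) → F, f (Pi.single t φ) ∈ blockSubspace U) :
    blockSubspace S ≤ (blockSubspace U).comap f := by
  intro v hv
  rw [Submodule.mem_comap, ← Finset.univ_sum_single v, map_sum]
  refine Submodule.sum_mem _ fun t _ => ?_
  by_cases ht : t ∈ S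
  · exact h t ht (v t)
  · simp [apply_eq_zero_of_mem_blockSubspace hv ht]

theorem exists_sub_mem_blockSubspace {e : (∀ i, Fin (k i) → F) ≃ₗ[F] (∀ i, Fin (k i) → F)}
    {J L : Finset ι}
    (hJL : blockSubspace J ≤ (blockSubspace L).comap e.symm.toLinearMap) (y : ∀ i, Fin (k i) → F) :
    ∃ a, y - a ∈ blockSubspace L ∧ e y - e a ∈ blockSubspace J ∧ ∀ t ∈ J, e a t = 0 := by
  set z := J.piecewise (e y) 0
  have hz : z ∈ blockSubspace J := by simpa using piecewise_sub_mem_blockSubspace J (e y) 0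
  refine ⟨y - e.symm z, by simpa using hJL hz, by simpa using hz, fun t ht => ?_⟩
  simp [z, ht]

end Support

section PrincipalIdeals
variable [Fintype ι] [PartialOrder ι]

theorem mem_pIdeal {s t : ι} : s ∈ pIdeal t ↔ s ≤ t := by
  simp [pIdeal]

theorem coe_pIdeal (t : ι) : (pIdeal t : Set ι) = Set.Iic t := by
  ext s
  simp [mem_pIdeal]

theorem isLowerSet_pIdeal (t : ι) : IsLowerSet (pIdeal t : Set ι) := by
  rw [coe_pIdeal]
  exact isLowerSet_Iic t

theorem isLowerSet_pIdeal_erase (t : ι) : IsLowerSet ((pIdeal t).erase t : Set ι) := by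
  intro a b hba ha
  simp only [coe_erase, coe_pIdeal, Set.mem_sdiff, Set.mem_Iic, Set.mem_singleton_iff] at ha ⊢
  exact ⟨hba.trans ha.1, fun hbt => ha.2 (le_antisymm ha.1 (hbt ▸ hba))⟩

theorem pIdeal_subset_pIdeal {s t : ι} : pIdeal s ⊆ pIdeal t ↔ s ≤ t := by
  rw [← coe_subset, coe_pIdeal, coe_pIdeal, Set.Iic_subset_Iic]

theorem eq_of_le_of_card_pIdeal_eq {s t : ι} (h : s ≤ t)
    (hc : (pIdeal s).card = (pIdeal t).card) : s = t := by
  have := Finset.eq_of_subset_of_card_le (pIdeal_subset_pIdeal.2 h) hc.ge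
  exact le_antisymm h (pIdeal_subset_pIdeal.1 this.ge)

theorem card_pIdeal_erase_add_one (t : ι) : ((pIdeal t).erase t).card + 1 = (pIdeal t).card :=
  card_erase_add_one (mem_pIdeal.2 le_rfl)

end PrincipalIdeals

section Ideals
variable [Fintype ι] [PartialOrder ι] [Field F] {k : ι → ℕ}

theorem mem_idealOf {u : ∀ i, Fin (k i) → F} {t : ι} : t ∈ idealOf u ↔ ∃ s ∈ suppB u, t ≤ s := by
  simp [idealOf]

theorem suppB_subset_idealOf (u : ∀ i, Fin (k i) → F) : suppB u ⊆ idealOf u :=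
  fun t ht => mem_idealOf.2 ⟨t, ht, le_rfl⟩

theorem idealOf_mono {u v : ∀ i, Fin (k i) → F} (h : suppB u ⊆ suppB v) :
    idealOf u ⊆ idealOf v := by
  intro t ht
  obtain ⟨s, hs, hts⟩ := mem_idealOf.1 ht
  exact mem_idealOf.2 ⟨s, h hs, hts⟩

theorem idealOf_subset {S : Finset ι} (hS : IsLowerSet (S : Set ι)) {u : ∀ i, Fin (k i) → F}
    (hu : suppB u ⊆ S) : idealOf u ⊆ S := by
  intro t ht
  obtain ⟨s, hs, hts⟩ := mem_idealOf.1 ht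
  exact hS hts (hu hs)

theorem idealOf_of_isLowerSet {u : ∀ i, Fin (k i) → F} (hu : IsLowerSet (suppB u : Set ι)) :
    idealOf u = suppB u :=
  (idealOf_subset hu subset_rfl).antisymm (suppB_subset_idealOf u)

theorem idealOf_eq_pIdeal {u : ∀ i, Fin (k i) → F} {t : ι} (hu : suppB u ⊆ pIdeal t)
    (ht : u t ≠ 0) : idealOf u = pIdeal t := by
  refine (idealOf_subset (isLowerSet_pIdeal t) hu).antisymm fun s hs => ?_
  exact mem_idealOf.2 ⟨t, mem_suppB.2 ht, mem_pIdeal.1 hs⟩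

theorem maxOf_subset_suppB (u : ∀ i, Fin (k i) → F) : maxOf u ⊆ suppB u := by
  intro t ht
  simp only [maxOf, mem_filter] at ht
  obtain ⟨s, hs, hts⟩ := mem_idealOf.1 ht.1
  rwa [ht.2 s (suppB_subset_idealOf u hs) hts]

theorem maxOf_subset_idealOf (u : ∀ i, Fin (k i) → F) : maxOf u ⊆ idealOf u :=
  filter_subset _ _

theorem maxOf_eq_singleton {u : ∀ i, Fin (k i) → F} {t : ι} (h : idealOf u = pIdeal t) :
    maxOf u = {t} := by
  ext s
  simp only [maxOf, mem_filter, h, mem_pIdeal, mem_singleton]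
  constructor
  · rintro ⟨hst, hmax⟩
    exact hmax t le_rfl hst
  · rintro rfl
    exact ⟨le_rfl, fun _ h h' => le_antisymm h' h⟩

end Ideals

section Omega
variable [Fintype ι] [PartialOrder ι] [Field F] [Fintype F] {k : ι → ℕ} (w : F → ℕ)

def localWeight (u : ∀ i, Fin (k i) → F) (t : ι) : ℕ :=
  if t ∈ maxOf u then Wblk w u t else Mw w

theorem omegaW_eq_sum_localWeight (u : ∀ i, Fin (k i) → F) :
    omegaW w u = ∑ t ∈ idealOf u, localWeight w u t := by
  unfold localWeight
  rw [sum_ite, filter_mem_eq_inter, inter_eq_right.2 (maxOf_subset_idealOf u),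
    sum_const, smul_eq_mul, omegaW, filter_not, filter_mem_eq_inter,
    inter_eq_right.2 (maxOf_subset_idealOf u)]

theorem localWeight_le_Mw (u : ∀ i, Fin (k i) → F) (t : ι) : localWeight w u t ≤ Mw w := by
  unfold localWeight
  split_ifs
  exacts [Wblk_le_Mw w u t, le_rfl]

theorem mw_le_localWeight (u : ∀ i, Fin (k i) → F) (t : ι) : mw w ≤ localWeight w u t := by
  unfold localWeight
  split_ifs with ht
  · exact mw_le_Wblk w (mem_suppB.1 (maxOf_subset_suppB u ht))
  · exact mw_le_Mw w

theorem localWeight_eq_Mw {u : ∀ i, Fin (k i) → F} {t : ι} (h : Wblk w u t = Mw w) :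
    localWeight w u t = Mw w := by
  simp [localWeight, h]

theorem omegaW_le_card_mul_Mw (u : ∀ i, Fin (k i) → F) :
    omegaW w u ≤ (idealOf u).card * Mw w := by
  rw [omegaW_eq_sum_localWeight, ← smul_eq_mul]
  exact sum_le_card_nsmul _ _ _ fun t _ => localWeight_le_Mw w u t

theorem omegaW_le_of_suppB_subset {S : Finset ι} (hS : IsLowerSet (S : Set ι))
    {u : ∀ i, Fin (k i) → F} (hu : suppB u ⊆ S) : omegaW w u ≤ S.card * Mw w :=
  (omegaW_le_card_mul_Mw w u).trans
    (Nat.mul_le_mul_right _ (card_le_card (idealOf_subset hS hu)))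

theorem omegaW_eq_card_mul_Mw {u : ∀ i, Fin (k i) → F}
    (h : ∀ t ∈ maxOf u, Wblk w u t = Mw w) : omegaW w u = (idealOf u).card * Mw w := by
  rw [omegaW_eq_sum_localWeight, ← smul_eq_mul, ← sum_const]
  refine sum_congr rfl fun t _ => ?_
  by_cases ht : t ∈ maxOf u
  · exact localWeight_eq_Mw w (h t ht)
  · simp [localWeight, ht]

theorem card_mul_Mw_add_card_mul_mw_le_omegaW {u : ∀ i, Fin (k i) → F} {J : Finset ι}
    (hJ : J ⊆ idealOf u) (hsat : ∀ t ∈ J, Wblk w u t = Mw w) :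
    J.card * Mw w + (idealOf u \ J).card * mw w ≤ omegaW w u := by
  have hJsum : ∑ t ∈ J, localWeight w u t = J.card * Mw w := by
    rw [sum_congr rfl fun t ht => localWeight_eq_Mw w (hsat t ht), sum_const, smul_eq_mul]
  have hrest : (idealOf u \ J).card * mw w ≤ ∑ t ∈ idealOf u \ J, localWeight w u t := by
    rw [← smul_eq_mul]
    exact card_nsmul_le_sum _ _ _ fun t _ => mw_le_localWeight w u t
  rw [omegaW_eq_sum_localWeight, ← sum_sdiff hJ, hJsum]
  omega

theorem omegaW_pos (hw0 : ∀ a, w a = 0 ↔ a = 0) {u : ∀ i, Fin (k i) → F} (hu : u ≠ 0) :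
    0 < omegaW w u := by
  obtain ⟨t, ht⟩ := Function.ne_iff.1 hu
  have hne : (idealOf u).Nonempty := ⟨t, suppB_subset_idealOf u (mem_suppB.2 ht)⟩
  calc 0 < (idealOf u).card • mw w := smul_pos hne.card_pos (one_le_mw w hw0)
    _ ≤ omegaW w u := by
      rw [omegaW_eq_sum_localWeight]
      exact card_nsmul_le_sum _ _ _ fun t _ => mw_le_localWeight w u t

theorem omegaW_of_suppB_subset_pIdeal {u : ∀ i, Fin (k i) → F} {t : ι} (hu : suppB u ⊆ pIdeal t)
    (ht : u t ≠ 0) : omegaW w u = Wblk w u t + ((pIdeal t).erase t).card * Mw w := by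
  have hI := idealOf_eq_pIdeal hu ht
  rw [omegaW, maxOf_eq_singleton hI, hI, sum_singleton, sdiff_singleton_eq_erase]

theorem omegaW_zero : omegaW w (0 : ∀ i, Fin (k i) → F) = 0 := by
  have : idealOf (0 : ∀ i, Fin (k i) → F) = ∅ := by
    ext t
    simp [mem_idealOf, mem_suppB]
  simpa [this] using omegaW_le_card_mul_Mw w (0 : ∀ i, Fin (k i) → F)

theorem card_pIdeal_add_one_mul_Mw_le_omegaW_add {u v : ∀ i, Fin (k i) → F} {μ ν : ι}
    (hu : suppB u = {μ}) (hv : suppB v = {ν}) (huμ : Wblk w u μ = Mw w) (hvν : Wblk w v ν = Mw w)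
    (hνμ : ¬ ν ≤ μ) : ((pIdeal μ).card + 1) * Mw w ≤ omegaW w (u + v) := by
  have hμν : μ ≠ ν := fun h => hνμ (h ▸ le_rfl)
  have hvμ : v μ = 0 := by
    by_contra h
    exact hμν (mem_singleton.1 (hv ▸ mem_suppB.2 h))
  have huν : u ν = 0 := by
    by_contra h
    exact hμν (mem_singleton.1 (hu ▸ mem_suppB.2 h)).symm
  have hμ : (u + v) μ = u μ := by simp [hvμ]
  have hν : (u + v) ν = v ν := by simp [huν]
  have hsat : ∀ t ∈ maxOf (u + v), Wblk w (u + v) t = Mw w := by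
    intro t ht
    have := suppB_add_subset u v (maxOf_subset_suppB _ ht)
    rw [hu, hv, mem_union, mem_singleton, mem_singleton] at this
    rcases this with rfl | rfl
    · simpa only [Wblk, hμ] using huμ
    · simpa only [Wblk, hν] using hvν
  have hsub : insert ν (pIdeal μ) ⊆ idealOf (u + v) := by
    refine insert_subset ?_ fun s hs => ?_
    · exact suppB_subset_idealOf _ (mem_suppB.2 (hν ▸ mem_suppB.1 (hv.ge (mem_singleton_self ν))))
    · exact mem_idealOf.2 ⟨μ, mem_suppB.2 (hμ ▸ mem_suppB.1 (hu.ge (mem_singleton_self μ))),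
        mem_pIdeal.1 hs⟩
  rw [omegaW_eq_card_mul_Mw w hsat, ← card_insert_of_notMem (mt mem_pIdeal.1 hνμ)]
  exact Nat.mul_le_mul_right _ (card_le_card hsub)

end Omega

section Isometry
variable [Fintype ι] [PartialOrder ι] [Field F] [Fintype F] {k : ι → ℕ} {w : F → ℕ}

theorem injective_of_omegaW_apply_eq (hw0 : ∀ a, w a = 0 ↔ a = 0)
    (f : (∀ i, Fin (k i) → F) →ₗ[F] (∀ i, Fin (k i) → F)) (hf : ∀ u, omegaW w (f u) = omegaW w u) :
    Function.Injective f := by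
  refine (injective_iff_map_eq_zero f).2 fun u hu => ?_
  by_contra h
  have := omegaW_pos w hw0 h
  rw [← hf, hu, omegaW_zero] at this
  exact this.false

theorem card_le_card_of_le_comap (hk : ∀ i, 0 < k i) (hw0 : ∀ a, w a = 0 ↔ a = 0)
    {f : (∀ i, Fin (k i) → F) →ₗ[F] (∀ i, Fin (k i) → F)} (hf : ∀ u, omegaW w (f u) = omegaW w u)
    {S U : Finset ι} (hS : IsLowerSet (S : Set ι)) (hU : IsLowerSet (U : Set ι))
    (h : blockSubspace S ≤ (blockSubspace U).comap f) : S.card ≤ U.card := by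
  obtain ⟨a, ha⟩ := exists_eq_Mw w
  set u : ∀ i, Fin (k i) → F := S.piecewise (fun _ _ => a) 0
  have hsupp : suppB u = S := by
    ext t
    by_cases ht : t ∈ S
    · simpa [mem_suppB, u, ht] using Function.ne_iff.2 ⟨⟨0, hk t⟩, ne_zero_of_eq_Mw w hw0 ha⟩
    · simp [mem_suppB, u, ht]
  have hu : omegaW w u = S.card * Mw w := by
    rw [omegaW_eq_card_mul_Mw w fun t ht => ?_, idealOf_of_isLowerSet (hsupp ▸ hS), hsupp]
    have htS : t ∈ S := hsupp ▸ maxOf_subset_suppB u ht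
    rw [Wblk_of_eq_const w (hk t) (piecewise_eq_of_mem _ _ _ htS), ha]
  have := omegaW_le_of_suppB_subset w hU (mem_blockSubspace.1 (h (mem_blockSubspace.2 hsupp.le)))
  rw [hf, hu] at this
  exact Nat.le_of_mul_le_mul_right this (one_le_Mw w hw0)

theorem eq_of_le_comap_pIdeal (hk : ∀ i, 0 < k i) (hw0 : ∀ a, w a = 0 ↔ a = 0)
    {f : (∀ i, Fin (k i) → F) →ₗ[F] (∀ i, Fin (k i) → F)} (hf : ∀ u, omegaW w (f u) = omegaW w u)
    {i j j' : ι} (hj : blockSubspace (pIdeal i) ≤ (blockSubspace (pIdeal j)).comap f)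
    (hj' : blockSubspace (pIdeal i) ≤ (blockSubspace (pIdeal j')).comap f)
    (hcj : (pIdeal j).card = (pIdeal i).card) (hcj' : (pIdeal j').card = (pIdeal i).card) :
    j = j' := by
  have hinter : IsLowerSet ((pIdeal j ∩ pIdeal j' : Finset ι) : Set ι) := by
    rw [coe_inter]
    exact (isLowerSet_pIdeal j).inter (isLowerSet_pIdeal j')
  have hle := card_le_card_of_le_comap hk hw0 hf (isLowerSet_pIdeal i) hinter fun v hv =>
    mem_blockSubspace.2 (subset_inter (mem_blockSubspace.1 (hj hv)) (mem_blockSubspace.1 (hj' hv)))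
  have heq : pIdeal j ∩ pIdeal j' = pIdeal j :=
    eq_of_subset_of_card_le inter_subset_left (hcj ▸ hle)
  exact eq_of_le_of_card_pIdeal_eq (pIdeal_subset_pIdeal.1 (heq ▸ inter_subset_right))
    (hcj.trans hcj'.symm)

end Isometry

section LowerSets
variable [Fintype ι] [PartialOrder ι] [Field F] {k : ι → ℕ}
  {e : (∀ i, Fin (k i) → F) ≃ₗ[F] (∀ i, Fin (k i) → F)}

theorem exists_isLowerSet_le_comap {L : Finset ι} (hL : IsLowerSet (L : Set ι))
    (h : ∀ t ∈ L, ∃ j, blockSubspace (pIdeal t) ≤ (blockSubspace (pIdeal j)).comap e.toLinearMap ∧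
      blockSubspace (pIdeal j) ≤ (blockSubspace (pIdeal t)).comap e.symm.toLinearMap) :
    ∃ J : Finset ι, IsLowerSet (J : Set ι) ∧
      blockSubspace L ≤ (blockSubspace J).comap e.toLinearMap ∧
      blockSubspace J ≤ (blockSubspace L).comap e.symm.toLinearMap := by
  refine ⟨univ.filter fun s => ∃ t ∈ L, ∃ j, (blockSubspace (pIdeal t) ≤
    (blockSubspace (pIdeal j)).comap e.toLinearMap ∧ blockSubspace (pIdeal j) ≤
      (blockSubspace (pIdeal t)).comap e.symm.toLinearMap) ∧ s ≤ j, ?_, ?_, ?_⟩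
  · intro a b hba ha
    simp only [coe_filter, mem_univ, true_and, Set.mem_ofPred_eq] at ha ⊢
    obtain ⟨t, ht, j, hj, haj⟩ := ha
    exact ⟨t, ht, j, hj, hba.trans haj⟩
  · refine le_comap_of_single _ fun t ht φ => ?_
    obtain ⟨j, hj⟩ := h t ht
    refine blockSubspace_mono (fun s hs => ?_)
      (hj.1 (single_mem_blockSubspace (mem_pIdeal.2 le_rfl) φ))
    simp only [mem_filter, mem_univ, true_and]
    exact ⟨t, ht, j, hj, mem_pIdeal.1 hs⟩
  · refine le_comap_of_single _ fun s hs φ => ?_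
    simp only [mem_filter, mem_univ, true_and] at hs
    obtain ⟨t, ht, j, hj, hsj⟩ := hs
    refine blockSubspace_mono (fun s' hs' => hL (mem_pIdeal.1 hs') ht) ?_
    exact hj.2 (single_mem_blockSubspace (mem_pIdeal.2 hsj) φ)

end LowerSets

section Step
variable [Fintype ι] [PartialOrder ι] [Field F] [Fintype F] {k : ι → ℕ} {w : F → ℕ}
  {e : (∀ i, Fin (k i) → F) ≃ₗ[F] (∀ i, Fin (k i) → F)} {i : ι} {J : Finset ι}

theorem omegaW_symm_apply (he : ∀ u, omegaW w (e u) = omegaW w u) (u : ∀ i, Fin (k i) → F) :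
    omegaW w (e.symm u) = omegaW w u := by
  rw [← he, e.apply_symm_apply]

theorem omegaW_apply_add_eq (he : ∀ u, omegaW w (e u) = omegaW w u)
    (hJL : blockSubspace J ≤ (blockSubspace ((pIdeal i).erase i)).comap e.symm.toLinearMap)
    {b : ∀ i, Fin (k i) → F} (hb : b ∈ blockSubspace (pIdeal i)) (hbi : b i ≠ 0)
    {z : ∀ i, Fin (k i) → F} (hz : z ∈ blockSubspace J) :
    omegaW w (e b + z) = Wblk w b i + ((pIdeal i).erase i).card * Mw w := by
  have hzL : e.symm z ∈ blockSubspace ((pIdeal i).erase i) := hJL hz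
  have hzi : e.symm z i = 0 := apply_eq_zero_of_mem_blockSubspace hzL (notMem_erase i _)
  have hmem : b + e.symm z ∈ blockSubspace (pIdeal i) :=
    add_mem hb (blockSubspace_mono (erase_subset _ _) hzL)
  have hi : (b + e.symm z) i = b i := by simp [hzi]
  rw [← e.apply_symm_apply z, ← map_add, he,
    omegaW_of_suppB_subset_pIdeal w (mem_blockSubspace.1 hmem) (hi ▸ hbi)]
  simp only [Wblk, hi]

theorem card_idealOf_sdiff_le_one (hk : ∀ i, 0 < k i) (hw0 : ∀ a, w a = 0 ↔ a = 0)
    (he : ∀ u, omegaW w (e u) = omegaW w u)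
    (hJL : blockSubspace J ≤ (blockSubspace ((pIdeal i).erase i)).comap e.symm.toLinearMap)
    (hcard : J.card = ((pIdeal i).erase i).card) {a : ∀ i, Fin (k i) → F} {r : Fin (k i)}
    (ha : a ∈ blockSubspace (pIdeal i)) (hai : a i = Pi.single r 1) (haJ : ∀ t ∈ J, e a t = 0) :
    (idealOf (e a) \ J).card ≤ 1 := by
  obtain ⟨c, hc, hcw⟩ := exists_ne_zero_eq_mw w
  obtain ⟨d, hdw⟩ := exists_eq_Mw w
  have hd := ne_zero_of_eq_Mw w hw0 hdw
  -- `u` weighs `mw + |J| Mw`, but every point of `idealOf u \ J` adds at least `mw` to `|J| Mw`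
  set u := J.piecewise (fun _ _ => d) (e (c • a))
  have hci : (c • a) i = Pi.single r c := by simp [hai, ← Pi.single_smul']
  have hu : omegaW w u = mw w + J.card * Mw w := by
    have := omegaW_apply_add_eq he hJL (Submodule.smul_mem _ c ha) (by simp [hci, hc])
      (piecewise_sub_mem_blockSubspace J (fun _ _ => d) (e (c • a)))
    rwa [add_sub_cancel, Wblk_of_eq_single w ((hw0 0).2 rfl) hci, hcw, ← hcard] at this
  have hJu : J ⊆ idealOf u := fun t ht => suppB_subset_idealOf u <| mem_suppB.2 <| by
    simpa [u, ht] using Function.ne_iff.2 ⟨⟨0, hk t⟩, hd⟩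
  have hsat : ∀ t ∈ J, Wblk w u t = Mw w := fun t ht => by
    rw [Wblk_of_eq_const w (hk t) (piecewise_eq_of_mem _ _ _ ht), hdw]
  have hsupp : suppB (e a) ⊆ suppB u := fun t ht => by
    have htJ : t ∉ J := fun htJ => mem_suppB.1 ht (haJ t htJ)
    simpa [mem_suppB, u, htJ, hc] using ht
  have hlow := card_mul_Mw_add_card_mul_mw_le_omegaW w hJu hsat
  rw [hu] at hlow
  have h1 : (idealOf u \ J).card ≤ 1 :=
    Nat.le_of_mul_le_mul_right (by omega) (one_le_mw w hw0)
  exact (card_le_card (sdiff_subset_sdiff (idealOf_mono hsupp) subset_rfl)).trans h1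

theorem exists_suppB_eq_singleton (hk : ∀ i, 0 < k i) (hw0 : ∀ a, w a = 0 ↔ a = 0)
    (he : ∀ u, omegaW w (e u) = omegaW w u)
    (hJL : blockSubspace J ≤ (blockSubspace ((pIdeal i).erase i)).comap e.symm.toLinearMap)
    (hcard : J.card = ((pIdeal i).erase i).card) {a : ∀ i, Fin (k i) → F} {r : Fin (k i)}
    (ha : a ∈ blockSubspace (pIdeal i)) (hai : a i = Pi.single r 1) (haJ : ∀ t ∈ J, e a t = 0) :
    ∃ μ, suppB (e a) = {μ} ∧ (pIdeal μ).erase μ ⊆ J := by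
  have hone := card_le_one.1 (card_idealOf_sdiff_le_one hk hw0 he hJL hcard ha hai haJ)
  have hsdiff : ∀ {t}, t ∈ suppB (e a) → t ∈ idealOf (e a) \ J := fun ht =>
    mem_sdiff.2 ⟨suppB_subset_idealOf _ ht, fun htJ => mem_suppB.1 ht (haJ _ htJ)⟩
  have hea : e a ≠ 0 := by
    rw [Ne, LinearEquiv.map_eq_zero_iff]
    rintro rfl
    simpa using congrFun hai r
  obtain ⟨μ, hμ⟩ := Function.ne_iff.1 hea
  have hμs : μ ∈ suppB (e a) := mem_suppB.2 hμ
  refine ⟨μ, ?_, fun s hs => ?_⟩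
  · exact eq_singleton_iff_unique_mem.2 ⟨hμs, fun t ht => hone _ (hsdiff ht) _ (hsdiff hμs)⟩
  · obtain ⟨hsμ, hs⟩ := mem_erase.1 hs
    by_contra hsJ
    exact hsμ (hone _ (mem_sdiff.2 ⟨mem_idealOf.2 ⟨μ, hμs, mem_pIdeal.1 hs⟩, hsJ⟩) _ (hsdiff hμs))

theorem erase_pIdeal_eq_of_suppB_eq_singleton (hw0 : ∀ a, w a = 0 ↔ a = 0)
    (he : ∀ u, omegaW w (e u) = omegaW w u)
    (hJL : blockSubspace J ≤ (blockSubspace ((pIdeal i).erase i)).comap e.symm.toLinearMap)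
    (hcard : J.card = ((pIdeal i).erase i).card) {a : ∀ i, Fin (k i) → F} {r : Fin (k i)}
    (ha : a ∈ blockSubspace (pIdeal i)) (hai : a i = Pi.single r 1) {μ : ι}
    (hμ : suppB (e a) = {μ}) (hμJ : (pIdeal μ).erase μ ⊆ J) {d : F} (hdw : w d = Mw w) :
    (pIdeal μ).erase μ = J ∧ Wblk w (e (d • a)) μ = Mw w := by
  have hd := ne_zero_of_eq_Mw w hw0 hdw
  have hdi : (d • a) i = Pi.single r d := by simp [hai, ← Pi.single_smul']
  have hω := omegaW_apply_add_eq he hJL (Submodule.smul_mem _ d ha) (by simp [hdi, hd])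
    (zero_mem (blockSubspace J))
  rw [add_zero, Wblk_of_eq_single w ((hw0 0).2 rfl) hdi, hdw] at hω
  have hdμ : suppB (e (d • a)) = {μ} := by rw [map_smul, suppB_smul hd, hμ]
  have hμμ : e (d • a) μ ≠ 0 := mem_suppB.1 (hdμ ▸ mem_singleton_self μ)
  rw [omegaW_of_suppB_subset_pIdeal w (hdμ ▸ singleton_subset_iff.2 (mem_pIdeal.2 le_rfl)) hμμ]
    at hω
  have hle : ((pIdeal μ).erase μ).card ≤ ((pIdeal i).erase i).card := hcard ▸ card_le_card hμJ
  have hW := Wblk_le_Mw w (e (d • a)) μ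
  have hM := one_le_Mw w hw0
  have hcardμ : ((pIdeal μ).erase μ).card = ((pIdeal i).erase i).card := by
    by_contra hne
    have : (((pIdeal μ).erase μ).card + 1) * Mw w ≤ ((pIdeal i).erase i).card * Mw w :=
      Nat.mul_le_mul_right _ (by omega)
    rw [add_mul, one_mul] at this
    omega
  refine ⟨eq_of_subset_of_card_le hμJ (by omega), ?_⟩
  rw [hcardμ] at hω
  omega

theorem exists_pIdeal_apply_single_mem (hk : ∀ i, 0 < k i) (hw0 : ∀ a, w a = 0 ↔ a = 0)
    (he : ∀ u, omegaW w (e u) = omegaW w u)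
    (hJL : blockSubspace J ≤ (blockSubspace ((pIdeal i).erase i)).comap e.symm.toLinearMap)
    (hcard : J.card = ((pIdeal i).erase i).card) (r : Fin (k i)) :
    ∃ μ, (pIdeal μ).card = (pIdeal i).card ∧ J ⊆ pIdeal μ ∧
      e (Pi.single i (Pi.single r 1)) ∈ blockSubspace (pIdeal μ) ∧
      ∃ b ∈ blockSubspace (pIdeal i), suppB (e b) = {μ} ∧ Wblk w (e b) μ = Mw w := by
  set y : ∀ i, Fin (k i) → F := Pi.single i (Pi.single r 1)
  obtain ⟨a, hya, heya, haJ⟩ := exists_sub_mem_blockSubspace hJL y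
  have hy : y ∈ blockSubspace (pIdeal i) := single_mem_blockSubspace (mem_pIdeal.2 le_rfl) _
  have ha : a ∈ blockSubspace (pIdeal i) := by
    simpa using sub_mem hy (blockSubspace_mono (erase_subset i _) hya)
  have hai : a i = Pi.single r 1 := by
    have := apply_eq_zero_of_mem_blockSubspace hya (notMem_erase i _)
    rw [Pi.sub_apply, sub_eq_zero] at this
    simpa [y] using this.symm
  obtain ⟨μ, hμ, hμJ⟩ := exists_suppB_eq_singleton hk hw0 he hJL hcard ha hai haJ
  obtain ⟨d, hdw⟩ := exists_eq_Mw w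
  obtain ⟨hE, hW⟩ :=
    erase_pIdeal_eq_of_suppB_eq_singleton hw0 he hJL hcard ha hai hμ hμJ hdw
  have hJμ : J ⊆ pIdeal μ := hE ▸ erase_subset μ _
  refine ⟨μ, ?_, hJμ, ?_, d • a, Submodule.smul_mem _ d ha, ?_, hW⟩
  · rw [← card_pIdeal_erase_add_one, hE, hcard, card_pIdeal_erase_add_one]
  · have hμμ : e a ∈ blockSubspace (pIdeal μ) :=
      mem_blockSubspace.2 (hμ ▸ singleton_subset_iff.2 (mem_pIdeal.2 le_rfl))
    simpa using add_mem (blockSubspace_mono hJμ heya) hμμ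
  · rw [map_smul, suppB_smul (ne_zero_of_eq_Mw w hw0 hdw), hμ]

theorem eq_of_suppB_apply_eq_singleton (hw0 : ∀ a, w a = 0 ↔ a = 0)
    (he : ∀ u, omegaW w (e u) = omegaW w u) {b b' : ∀ i, Fin (k i) → F}
    (hb : b ∈ blockSubspace (pIdeal i)) (hb' : b' ∈ blockSubspace (pIdeal i)) {μ μ' : ι}
    (hμ : suppB (e b) = {μ}) (hμ' : suppB (e b') = {μ'}) (hW : Wblk w (e b) μ = Mw w)
    (hW' : Wblk w (e b') μ' = Mw w) (hc : (pIdeal μ).card = (pIdeal i).card)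
    (hc' : (pIdeal μ').card = (pIdeal i).card) : μ = μ' := by
  by_contra hne
  have hle : ¬ μ' ≤ μ := fun h => hne (eq_of_le_of_card_pIdeal_eq h (hc'.trans hc.symm)).symm
  have hlow := card_pIdeal_add_one_mul_Mw_le_omegaW_add w hμ hμ' hW hW' hle
  have hup := omegaW_le_of_suppB_subset w (isLowerSet_pIdeal i)
    (mem_blockSubspace.1 (add_mem hb hb'))
  rw [← map_add, he, hc, add_mul, one_mul] at hlow
  have := one_le_Mw w hw0
  omega

theorem exists_le_comap_pIdeal_of_isLowerSet (hk : ∀ i, 0 < k i) (hw0 : ∀ a, w a = 0 ↔ a = 0)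
    (he : ∀ u, omegaW w (e u) = omegaW w u) (hJ : IsLowerSet (J : Set ι))
    (hLJ : blockSubspace ((pIdeal i).erase i) ≤ (blockSubspace J).comap e.toLinearMap)
    (hJL : blockSubspace J ≤ (blockSubspace ((pIdeal i).erase i)).comap e.symm.toLinearMap) :
    ∃ μ, (pIdeal μ).card = (pIdeal i).card ∧
      blockSubspace (pIdeal i) ≤ (blockSubspace (pIdeal μ)).comap e.toLinearMap := by
  have hcard : J.card = ((pIdeal i).erase i).card :=
    (card_le_card_of_le_comap hk hw0 (omegaW_symm_apply he) hJ (isLowerSet_pIdeal_erase i)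
      hJL).antisymm (card_le_card_of_le_comap hk hw0 he (isLowerSet_pIdeal_erase i) hJ hLJ)
  have hsingle := exists_pIdeal_apply_single_mem hk hw0 he hJL hcard
  obtain ⟨μ, hμc, hJμ, -, b, hb, hbμ, hWb⟩ := hsingle ⟨0, hk i⟩
  refine ⟨μ, hμc, le_comap_of_single _ fun t ht φ => ?_⟩
  rcases eq_or_ne t i with rfl | hti
  · rw [single_eq_sum_smul_single, map_sum]
    refine Submodule.sum_mem _ fun r _ => ?_
    obtain ⟨μ', hμ'c, -, hy, b', hb', hb'μ', hWb'⟩ := hsingle r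
    rw [eq_of_suppB_apply_eq_singleton hw0 he hb' hb hb'μ' hbμ hWb' hWb hμ'c hμc] at hy
    simpa using Submodule.smul_mem _ (φ r) hy
  · exact blockSubspace_mono hJμ (hLJ (single_mem_blockSubspace (mem_erase.2 ⟨hti, ht⟩) φ))

end Step

section Main
variable [Fintype ι] [PartialOrder ι] [Field F] [Fintype F] {k : ι → ℕ} {w : F → ℕ}

theorem exists_le_comap_pIdeal (hk : ∀ i, 0 < k i) (hw0 : ∀ a, w a = 0 ↔ a = 0)
    (e : (∀ i, Fin (k i) → F) ≃ₗ[F] (∀ i, Fin (k i) → F)) (he : ∀ u, omegaW w (e u) = omegaW w u)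
    (i : ι) : ∃ j, (pIdeal j).card = (pIdeal i).card ∧
      blockSubspace (pIdeal i) ≤ (blockSubspace (pIdeal j)).comap e.toLinearMap := by
  induction hn : (pIdeal i).card using Nat.strong_induction_on generalizing e i with
  | _ n ih =>
  have hlt : ∀ t ∈ (pIdeal i).erase i, (pIdeal t).card < n := fun t ht => by
    have := card_le_card fun s hs => isLowerSet_pIdeal_erase i (mem_pIdeal.1 hs) ht
    have := card_pIdeal_erase_add_one i
    omega
  have h : ∀ t ∈ (pIdeal i).erase i, ∃ j,
      blockSubspace (pIdeal t) ≤ (blockSubspace (pIdeal j)).comap e.toLinearMap ∧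
      blockSubspace (pIdeal j) ≤ (blockSubspace (pIdeal t)).comap e.symm.toLinearMap := by
    intro t ht
    obtain ⟨j, hj, htj⟩ := ih _ (hlt t ht) e he t rfl
    obtain ⟨l, hl, hjl⟩ := ih _ (hj ▸ hlt t ht) e.symm (omegaW_symm_apply he) j rfl
    have htl : pIdeal t ⊆ pIdeal l :=
      subset_of_blockSubspace_le hk fun v hv => by simpa using hjl (htj hv)
    rw [← eq_of_le_of_card_pIdeal_eq (pIdeal_subset_pIdeal.1 htl) (hl.trans hj).symm] at hjl
    exact ⟨j, htj, hjl⟩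
  obtain ⟨J, hJ, hLJ, hJL⟩ := exists_isLowerSet_le_comap (isLowerSet_pIdeal_erase i) h
  exact hn ▸ exists_le_comap_pIdeal_of_isLowerSet hk hw0 he hJ hLJ hJL

end Main

theorem stmt10_general [Fintype ι] [PartialOrder ι] [Field F] [Fintype F] {k : ι → ℕ}
    (hk : ∀ i, 0 < k i)
    (w : F → ℕ)
    (hw0 : ∀ a : F, w a = 0 ↔ a = 0)
    (T : (∀ i, Fin (k i) → F) →ₗ[F] (∀ i, Fin (k i) → F))
    (hT : ∀ u : ∀ i, Fin (k i) → F, omegaW w (T u) = omegaW w u)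
    (i : ι) :
    ∃! j : ι, (pIdeal i).card = (pIdeal j).card ∧
      ∀ v : ∀ i, Fin (k i) → F, suppB v ⊆ pIdeal i → suppB (T v) ⊆ pIdeal j := by
  have hinj := injective_of_omegaW_apply_eq hw0 T hT
  let e := LinearEquiv.ofBijective T ⟨hinj, LinearMap.injective_iff_surjective.1 hinj⟩
  obtain ⟨j, hj, hij⟩ := exists_le_comap_pIdeal hk hw0 e hT i
  refine ⟨j, ⟨hj.symm, fun v hv => mem_blockSubspace.1 (hij (mem_blockSubspace.2 hv))⟩, ?_⟩
  rintro j' ⟨hj', hij'⟩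
  exact (eq_of_le_comap_pIdeal hk hw0 hT hij
    (fun v hv => mem_blockSubspace.2 (hij' v (mem_blockSubspace.1 hv))) hj hj'.symm).symm

/-- For a linear isometry `T` and `i ∈ [s]`, there is a unique `j` with
`|⟨i⟩| = |⟨j⟩|` and `T(V_{⟨i⟩}) ⊆ V_{⟨j⟩}`. -/
theorem stmt10 [Fintype ι] [PartialOrder ι] [Field F] [Fintype F] {k : ι → ℕ}
    (hk : ∀ i, 0 < k i)
    (w : F → ℕ)
    (hw0 : ∀ a : F, w a = 0 ↔ a = 0)
    (hwneg : ∀ a : F, w (-a) = w a)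
    (hwadd : ∀ a b : F, w (a + b) ≤ w a + w b)
    (T : (∀ i, Fin (k i) → F) →ₗ[F] (∀ i, Fin (k i) → F))
    (hT : ∀ u : ∀ i, Fin (k i) → F, omegaW w (T u) = omegaW w u)
    (i : ι) :
    ∃! j : ι, (pIdeal i).card = (pIdeal j).card ∧
      ∀ v : ∀ i, Fin (k i) → F, suppB v ⊆ pIdeal i → suppB (T v) ⊆ pIdeal j :=
  stmt10_general hk w hw0 T hT i
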